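/- arXiv:1012.4263 — 3 statements merged into one kernel-verified Lean document; each statement's English description precedes it below -/
import Mathlib

section
/- For all indices i, j with 0 ≤ i < j ≤ n−1, the length of the longest common prefix of the suffixes S_{SUF[i]} and S_{SUF[j]} equals the minimum of LCP[l] over all l with i+1 ≤ l ≤ j, i.e. lcp(S_{SUF[i]}, S_{SUF[j]}) = min{ LCP[l] : i+1 ≤ l ≤ j }. -/
/-!
Along a lexicographically increasing chain `u < v < w` of lists, the common prefix of `u` and
`w` is exactly as long as the shorter of the common prefixes of `u, v` and of `v, w`: a first
disagreement of `u` and `w` must already be a disagreement of `v` with one of them. Applying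
this along the sorted suffixes `S_{SUF[i]} < ⋯ < S_{SUF[j]}` turns the longest common prefix of
the two ends into the minimum of the adjacent ones.
-/

/-- Length of the longest common prefix of two lists. -/
def lcpLen {α : Type*} [DecidableEq α] : List α → List α → ℕ
  | a :: u, b :: v => if a = b then lcpLen u v + 1 else 0
  | _, _ => 0

/-- The suffix of `S` starting at position `i` (as a list). -/
def sfx {α : Type*} {n : ℕ} (S : Fin n → α) (i : ℕ) : List α :=
  (List.ofFn S).drop i

section

variable {α : Type*} [Preorder α]

theorem lex_of_chain {f : ℕ → List α} {i j : ℕ} (hij : i < j)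
    (hf : ∀ k, i ≤ k → k < j → List.Lex (· < ·) (f k) (f (k + 1))) :
    List.Lex (· < ·) (f i) (f j) := by
  induction j, hij using Nat.le_induction with
  | base => exact hf i le_rfl (lt_add_one i)
  | succ m him ih =>
    exact List.lex_trans lt_trans (ih fun k hik hkm => hf k hik (by omega))
      (hf m (by omega) (lt_add_one m))

variable [DecidableEq α]

theorem lcpLen_eq_min_of_lex {u v w : List α} (huv : List.Lex (· < ·) u v)
    (hvw : List.Lex (· < ·) v w) : lcpLen u w = min (lcpLen u v) (lcpLen v w) := by
  induction huv generalizing w with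
  | nil => cases hvw <;> simp [lcpLen]
  | @cons a u v huv ih =>
    cases hvw with
    | cons hvw => simp [lcpLen, ih hvw]
    | rel hab => simp [lcpLen, hab.ne]
  | @rel a b u v hab =>
    cases hvw with
    | cons => simp [lcpLen, hab.ne]
    | rel hbc => simp [lcpLen, hab.ne, (hab.trans hbc).ne]

theorem lcpLen_eq_inf'_of_chain {f : ℕ → List α} {i j : ℕ} (hij : i < j)
    (hf : ∀ k, i ≤ k → k < j → List.Lex (· < ·) (f k) (f (k + 1))) :
    lcpLen (f i) (f j) =
      (Finset.Icc (i + 1) j).inf' (Finset.nonempty_Icc.mpr hij)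
        fun l => lcpLen (f (l - 1)) (f l) := by
  induction j, hij using Nat.le_induction with
  | base => simp
  | succ m him ih =>
    have hf' : ∀ k, i ≤ k → k < m → List.Lex (· < ·) (f k) (f (k + 1)) :=
      fun k hik hkm => hf k hik (by omega)
    have hIcc : Finset.Icc (i + 1) (m + 1) = insert (m + 1) (Finset.Icc (i + 1) m) :=
      (Finset.insert_Icc_right_eq_Icc_add_one (by omega)).symm
    rw [lcpLen_eq_min_of_lex (lex_of_chain him hf') (hf m (by omega) (lt_add_one m)), ih hf',
      Finset.inf'_congr (Finset.nonempty_Icc.mpr (by omega)) hIcc fun _ _ => rfl,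
      Finset.inf'_insert, min_comm, Nat.add_sub_cancel]

end

/-- For `0 ≤ i < j ≤ n-1`,
`lcp(S_{SUF[i]}, S_{SUF[j]}) = min { LCP[l] : i+1 ≤ l ≤ j }`. -/
theorem lcp_eq_range_min {α : Type*} [LinearOrder α] {n : ℕ}
    (S : Fin n → α)
    (SUF : Equiv.Perm (Fin n))
    (hSUF : ∀ i j : Fin n, i < j →
      List.Lex (· < ·) (sfx S ((SUF i : Fin n) : ℕ)) (sfx S ((SUF j : Fin n) : ℕ)))
    (LCP : ℕ → ℕ)
    (hLCP : ∀ l, ∀ _ : 1 ≤ l, ∀ h2 : l < n,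
      LCP l = lcpLen (sfx S ((SUF ⟨l - 1, by omega⟩ : Fin n) : ℕ))
                     (sfx S ((SUF ⟨l, h2⟩ : Fin n) : ℕ)))
    (i j : ℕ) (hij : i < j) (hj : j ≤ n - 1) :
    lcpLen (sfx S ((SUF ⟨i, by omega⟩ : Fin n) : ℕ))
           (sfx S ((SUF ⟨j, by omega⟩ : Fin n) : ℕ)) =
      (Finset.Icc (i + 1) j).inf' (Finset.nonempty_Icc.mpr (by omega)) LCP := by
  let f : ℕ → List α := fun l => if h : l < n then sfx S (SUF ⟨l, h⟩) else []
  have hf : ∀ l (h : l < n), f l = sfx S (SUF ⟨l, h⟩) := fun l h => dif_pos h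
  have hchain := lcpLen_eq_inf'_of_chain (f := f) hij fun k _ hkj => by
    rw [hf k (by omega), hf (k + 1) (by omega)]
    exact hSUF _ _ (Fin.mk_lt_mk.mpr (lt_add_one k))
  rw [← hf i (by omega), ← hf j (by omega), hchain]
  refine Finset.inf'_congr _ rfl fun l hl => ?_
  obtain ⟨hil, hlj⟩ := Finset.mem_Icc.mp hl
  rw [hLCP l (by omega) (by omega), hf l (by omega), hf (l - 1) (by omega)]
end

section
/- If 0 ≤ i < j ≤ n−1 and BWT[i] = BWT[j], then LF[i] < LF[j]; that is, the LF-mapping is strictly increasing on the set of positions carrying the same BWT character. -/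
/-- Burrows–Wheeler transform: `BWT[i] = S[SUF[i]-1]` if `SUF[i] ≠ 0`,
    and the sentinel `S[n-1]` otherwise. -/
def bwtOf {α : Type*} {n : ℕ} (hn : 0 < n) (S : Fin n → α)
    (SUF : Equiv.Perm (Fin n)) (i : Fin n) : α :=
  if (SUF i : ℕ) = 0 then S ⟨n - 1, by omega⟩
  else S ⟨(SUF i : ℕ) - 1, lt_of_le_of_lt (Nat.sub_le _ _) (Fin.isLt _)⟩

/-- LF-mapping: `LF[i] = ISA[SUF[i]-1]` if `SUF[i] ≠ 0`, and `0` otherwise. -/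
def lfOf {n : ℕ} (hn : 0 < n) (SUF : Equiv.Perm (Fin n)) (i : Fin n) : Fin n :=
  if (SUF i : ℕ) = 0 then ⟨0, hn⟩
  else SUF.symm ⟨(SUF i : ℕ) - 1, lt_of_le_of_lt (Nat.sub_le _ _) (Fin.isLt _)⟩

/-!
If `BWT[i] = BWT[j] = c`, the sentinel forces `SUF[i], SUF[j] ≠ 0`, so the suffixes at the
LF-positions are `c :: S_{SUF[i]}` and `c :: S_{SUF[j]}`. Prepending `c` preserves the
lexicographic order of the suffixes, and the suffix array reflects that order back to indices.
-/

section SuffixArray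

variable {α : Type*} {n : ℕ}

lemma sfx_eq_cons (S : Fin n → α) (p : Fin n) : sfx S p = S p :: sfx S (p + 1) := by
  rw [sfx, List.drop_eq_getElem_cons (by simp)]
  simp [sfx]

lemma suf_lfOf_add_one (hn : 0 < n) (SUF : Equiv.Perm (Fin n)) {i : Fin n}
    (hi : (SUF i : ℕ) ≠ 0) : (SUF (lfOf hn SUF i) : ℕ) + 1 = SUF i := by
  simp only [lfOf, hi, if_false, Equiv.apply_symm_apply]
  omega

lemma sfx_suf_lfOf (hn : 0 < n) (S : Fin n → α) (SUF : Equiv.Perm (Fin n)) {i : Fin n}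
    (hi : (SUF i : ℕ) ≠ 0) :
    sfx S (SUF (lfOf hn SUF i)) = bwtOf hn S SUF i :: sfx S (SUF i) := by
  rw [sfx_eq_cons, suf_lfOf_add_one hn SUF hi]
  simp [lfOf, bwtOf, hi]

lemma suf_ne_zero_of_bwtOf_eq [Preorder α] (hn : 0 < n) (S : Fin n → α)
    (hsent : ∀ k : Fin n, (k : ℕ) < n - 1 → S ⟨n - 1, by omega⟩ < S k)
    (SUF : Equiv.Perm (Fin n)) {i j : Fin n} (hij : i ≠ j)
    (hbwt : bwtOf hn S SUF i = bwtOf hn S SUF j) : (SUF i : ℕ) ≠ 0 := by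
  intro hi
  have hj : (SUF j : ℕ) ≠ 0 := fun hj => hij (SUF.injective (Fin.ext (hi.trans hj.symm)))
  refine (hsent _ ?_).ne (by simpa [bwtOf, hi, hj] using hbwt)
  have := (SUF j).isLt
  dsimp only
  omega

end SuffixArray

/-- The LF-mapping is strictly increasing on positions carrying the same BWT character. -/
theorem lf_strict_mono_on_equal_bwt {α : Type*} [LinearOrder α] {n : ℕ} (hn : 0 < n)
    (S : Fin n → α)
    (hsent : ∀ k : Fin n, (k : ℕ) < n - 1 → S ⟨n - 1, by omega⟩ < S k)
    (SUF : Equiv.Perm (Fin n))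
    (hSUF : ∀ i j : Fin n, i < j →
      List.Lex (· < ·) (sfx S ((SUF i : Fin n) : ℕ)) (sfx S ((SUF j : Fin n) : ℕ)))
    (i j : Fin n) (hij : i < j)
    (hbwt : bwtOf hn S SUF i = bwtOf hn S SUF j) :
    lfOf hn SUF i < lfOf hn SUF j := by
  have hsorted : StrictMono fun k => sfx S (SUF k) := hSUF
  have hi := suf_ne_zero_of_bwtOf_eq hn S hsent SUF hij.ne hbwt
  have hj := suf_ne_zero_of_bwtOf_eq hn S hsent SUF hij.ne' hbwt.symm
  apply hsorted.lt_iff_lt.mp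
  simp only [sfx_suf_lfOf hn S SUF hi, sfx_suf_lfOf hn S SUF hj, hbwt]
  exact List.Lex.cons (hsorted hij)
end

section
/- Suppose 0 ≤ i ≤ n−1, SUF[i] ≠ 0, and there exists j < i with BWT[j] = BWT[i]; let p = prev(i) be the largest such j. Then LF[p] = LF[i] − 1. -/
lemma sfx_cons {α : Type*} {n : ℕ} (S : Fin n → α) (a : ℕ) (ha : a < n) :
    sfx S a = S ⟨a, ha⟩ :: sfx S (a + 1) := by
  unfold sfx
  rw [List.drop_eq_getElem_cons (by simpa using ha)]
  simp

lemma lex_cons_head {α : Type*} [LinearOrder α] {a b : α} {u v : List α}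
    (h : List.Lex (· < ·) (a :: u) (b :: v)) : a ≤ b := by
  cases h with
  | rel h => exact le_of_lt h
  | cons _ => exact le_rfl

/-- Converse of the sortedness hypothesis. -/
lemma suf_lt_of_lex {α : Type*} [LinearOrder α] {n : ℕ}
    (S : Fin n → α) (SUF : Equiv.Perm (Fin n))
    (hSUF : ∀ i j : Fin n, i < j →
      List.Lex (· < ·) (sfx S ((SUF i : Fin n) : ℕ)) (sfx S ((SUF j : Fin n) : ℕ)))
    {x y : Fin n}
    (h : List.Lex (· < ·) (sfx S ((SUF x : Fin n) : ℕ)) (sfx S ((SUF y : Fin n) : ℕ))) :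
    x < y := by
  rcases lt_trichotomy x y with h1 | h1 | h1
  · exact h1
  · subst h1; exact absurd h (by exact irrefl_of (List.Lex (· < ·)) _)
  · exact absurd h (asymm_of (List.Lex (· < ·)) (hSUF y x h1))

/-- LF preserves order among positions with equal BWT character. -/
lemma lf_mono {α : Type*} [LinearOrder α] {n : ℕ} (hn : 0 < n)
    (S : Fin n → α) (SUF : Equiv.Perm (Fin n))
    (hSUF : ∀ i j : Fin n, i < j →
      List.Lex (· < ·) (sfx S ((SUF i : Fin n) : ℕ)) (sfx S ((SUF j : Fin n) : ℕ)))
    {j k : Fin n} (hj : (SUF j : ℕ) ≠ 0) (hk : (SUF k : ℕ) ≠ 0)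
    (hb : bwtOf hn S SUF j = bwtOf hn S SUF k) (hjk : j < k) :
    lfOf hn SUF j < lfOf hn SUF k := by
  simp only [bwtOf, if_neg hj, if_neg hk] at hb
  have hlex : List.Lex (· < ·) (sfx S ((SUF j : Fin n) : ℕ)) (sfx S ((SUF k : Fin n) : ℕ)) :=
    hSUF j k hjk
  have haj : ((SUF j : ℕ) - 1) < n := lt_of_le_of_lt (Nat.sub_le _ _) (Fin.isLt _)
  have hak : ((SUF k : ℕ) - 1) < n := lt_of_le_of_lt (Nat.sub_le _ _) (Fin.isLt _)
  have e1 : sfx S ((SUF j : ℕ) - 1) = S ⟨(SUF j : ℕ) - 1, haj⟩ :: sfx S ((SUF j : ℕ)) := by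
    have h := sfx_cons S ((SUF j : ℕ) - 1) haj
    rwa [show (SUF j : ℕ) - 1 + 1 = (SUF j : ℕ) from by omega] at h
  have e2 : sfx S ((SUF k : ℕ) - 1) = S ⟨(SUF k : ℕ) - 1, hak⟩ :: sfx S ((SUF k : ℕ)) := by
    have h := sfx_cons S ((SUF k : ℕ) - 1) hak
    rwa [show (SUF k : ℕ) - 1 + 1 = (SUF k : ℕ) from by omega] at h
  have hlex2 : List.Lex (· < ·) (sfx S ((SUF j : ℕ) - 1)) (sfx S ((SUF k : ℕ) - 1)) := by
    rw [e1, e2, hb]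
    exact List.Lex.cons hlex
  simp only [lfOf, if_neg hj, if_neg hk]
  apply suf_lt_of_lex S SUF hSUF
  simpa using hlex2

/-- If `SUF[i] ≠ 0` and `p = prev(i)` is the largest index `< i` with
`BWT[p] = BWT[i]`, then `LF[p] = LF[i] - 1`. -/
theorem lf_prev {α : Type*} [LinearOrder α] {n : ℕ} (hn : 0 < n)
    (S : Fin n → α)
    (hsent : ∀ k : Fin n, (k : ℕ) < n - 1 → S ⟨n - 1, by omega⟩ < S k)
    (SUF : Equiv.Perm (Fin n))
    (hSUF : ∀ i j : Fin n, i < j →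
      List.Lex (· < ·) (sfx S ((SUF i : Fin n) : ℕ)) (sfx S ((SUF j : Fin n) : ℕ)))
    (i : Fin n) (hi0 : (SUF i : ℕ) ≠ 0)
    (p : Fin n) (hpi : p < i) (hpb : bwtOf hn S SUF p = bwtOf hn S SUF i)
    (hpmax : ∀ j : Fin n, j < i → bwtOf hn S SUF j = bwtOf hn S SUF i → j ≤ p) :
    ((lfOf hn SUF p : Fin n) : ℤ) = ((lfOf hn SUF i : Fin n) : ℤ) - 1 := by
  have hn2 : 2 ≤ n := by
    have h1 : (p : ℕ) < (i : ℕ) := hpi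
    have h2 := i.isLt
    omega
  -- the sentinel is strictly smaller than BWT[i]
  have hii : ((SUF i : ℕ) - 1) < n := lt_of_le_of_lt (Nat.sub_le _ _) (Fin.isLt _)
  set c : α := S ⟨(SUF i : ℕ) - 1, hii⟩ with hc
  have hbwti : bwtOf hn S SUF i = c := by simp [bwtOf, if_neg hi0, hc]
  have hsc : S ⟨n - 1, by omega⟩ < c := by
    apply hsent
    show (SUF i : ℕ) - 1 < n - 1
    have := (SUF i).isLt
    omega
  -- SUF p ≠ 0
  have hp0 : (SUF p : ℕ) ≠ 0 := by
    intro h0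
    rw [hbwti] at hpb
    simp only [bwtOf, if_pos h0] at hpb
    exact absurd hpb (ne_of_lt hsc)
  -- LF p < LF i
  have hlf_pi : lfOf hn SUF p < lfOf hn SUF i := lf_mono hn S SUF hSUF hp0 hi0 hpb hpi
  have hlfi_pos : 0 < ((lfOf hn SUF i : Fin n) : ℕ) := lt_of_le_of_lt (Nat.zero_le _) hlf_pi
  set L : Fin n := lfOf hn SUF i with hL
  have hmlt : ((L : ℕ) - 1) < n := lt_of_le_of_lt (Nat.sub_le _ _) (Fin.isLt _)
  set m : Fin n := ⟨(L : ℕ) - 1, hmlt⟩ with hm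
  have hmval : (m : ℕ) = (L : ℕ) - 1 := rfl
  have hpm : lfOf hn SUF p ≤ m := by
    have h : ((lfOf hn SUF p : Fin n) : ℕ) < (L : ℕ) := hlf_pi
    rw [Fin.le_def, hmval]
    omega
  have hmL : m < L := by rw [Fin.lt_def, hmval]; omega
  -- SUF L = SUF i - 1 and the suffix there starts with c
  have hSUFL : ((SUF L : Fin n) : ℕ) = (SUF i : ℕ) - 1 := by
    rw [hL]
    simp only [lfOf, if_neg hi0, Equiv.apply_symm_apply]
  have hLcons : sfx S ((SUF L : ℕ)) = c :: sfx S ((SUF i : ℕ)) := by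
    rw [hSUFL]
    have h := sfx_cons S ((SUF i : ℕ) - 1) hii
    rwa [show (SUF i : ℕ) - 1 + 1 = (SUF i : ℕ) from by omega] at h
  -- SUF (LF p) = SUF p - 1 and the suffix there starts with c too
  have hpp : ((SUF p : ℕ) - 1) < n := lt_of_le_of_lt (Nat.sub_le _ _) (Fin.isLt _)
  have hSUFP : ((SUF (lfOf hn SUF p) : Fin n) : ℕ) = (SUF p : ℕ) - 1 := by
    simp only [lfOf, if_neg hp0, Equiv.apply_symm_apply]
  have hbp : S ⟨(SUF p : ℕ) - 1, hpp⟩ = c := by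
    rw [hbwti] at hpb
    simpa [bwtOf, if_neg hp0] using hpb
  have hPcons : sfx S ((SUF (lfOf hn SUF p) : ℕ)) = c :: sfx S ((SUF p : ℕ)) := by
    rw [hSUFP, ← hbp]
    have h := sfx_cons S ((SUF p : ℕ) - 1) hpp
    rwa [show (SUF p : ℕ) - 1 + 1 = (SUF p : ℕ) from by omega] at h
  -- first character of the suffix at SUF m is c
  have hmn : ((SUF m : Fin n) : ℕ) < n := (SUF m).isLt
  have hheadm : S ⟨(SUF m : ℕ), hmn⟩ = c := by
    rcases eq_or_lt_of_le hpm with heq | hlt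
    · have hv : ((SUF m : Fin n) : ℕ) = (SUF p : ℕ) - 1 := by rw [← heq]; exact hSUFP
      rw [show (⟨(SUF m : ℕ), hmn⟩ : Fin n) = ⟨(SUF p : ℕ) - 1, hpp⟩ from Fin.ext hv]
      exact hbp
    · have h1 : List.Lex (· < ·) (sfx S ((SUF (lfOf hn SUF p) : ℕ))) (sfx S ((SUF m : ℕ))) :=
        hSUF _ _ hlt
      have h2 : List.Lex (· < ·) (sfx S ((SUF m : ℕ))) (sfx S ((SUF L : ℕ))) :=
        hSUF _ _ hmL
      rw [hPcons, sfx_cons S _ hmn] at h1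
      rw [hLcons, sfx_cons S _ hmn] at h2
      exact le_antisymm (lex_cons_head h2) (lex_cons_head h1)
  -- SUF m ≠ n - 1, hence SUF m + 1 < n
  have hmn1 : ((SUF m : Fin n) : ℕ) + 1 < n := by
    rcases Nat.lt_or_ge ((SUF m : ℕ) + 1) n with h | h
    · exact h
    · exfalso
      have hv : (SUF m : ℕ) = n - 1 := by have := (SUF m).isLt; omega
      have he : S ⟨(SUF m : ℕ), hmn⟩ = S ⟨n - 1, by omega⟩ := by
        congr 1
        exact Fin.ext hv
      rw [hheadm] at he
      exact absurd he.symm (ne_of_lt hsc)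
  -- define q with SUF q = SUF m + 1
  set q : Fin n := SUF.symm ⟨(SUF m : ℕ) + 1, hmn1⟩ with hq
  have hSUFq : ((SUF q : Fin n) : ℕ) = (SUF m : ℕ) + 1 := by
    rw [hq]; simp
  have hq0 : (SUF q : ℕ) ≠ 0 := by omega
  have hbq : bwtOf hn S SUF q = bwtOf hn S SUF i := by
    rw [hbwti]
    simp only [bwtOf, if_neg hq0]
    rw [show (⟨(SUF q : ℕ) - 1, lt_of_le_of_lt (Nat.sub_le _ _) (Fin.isLt _)⟩ : Fin n)
        = ⟨(SUF m : ℕ), hmn⟩ from Fin.ext (by simp only; omega)]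
    exact hheadm
  have hlfq : lfOf hn SUF q = m := by
    simp only [lfOf, if_neg hq0]
    rw [show (⟨(SUF q : ℕ) - 1, lt_of_le_of_lt (Nat.sub_le _ _) (Fin.isLt _)⟩ : Fin n)
        = SUF m from Fin.ext (by simp only; omega)]
    simp
  -- q < i
  have hqi : q < i := by
    rcases lt_trichotomy q i with h | h | h
    · exact h
    · exfalso
      rw [h] at hlfq
      rw [← hL] at hlfq
      exact absurd hlfq.symm (ne_of_lt hmL)
    · exfalso
      have hx := lf_mono hn S SUF hSUF hi0 hq0 hbq.symm h
      rw [hlfq, ← hL] at hx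
      exact absurd (hx.trans hmL) (lt_irrefl _)
  -- q ≤ p, hence q = p and LF p = m
  have hqp : q ≤ p := hpmax q hqi hbq
  have hqep : lfOf hn SUF p = m := by
    rcases eq_or_lt_of_le hqp with h | h
    · rw [← h, hlfq]
    · exfalso
      have hbqp : bwtOf hn S SUF q = bwtOf hn S SUF p := by rw [hbq, hpb]
      have hx := lf_mono hn S SUF hSUF hq0 hp0 hbqp h
      rw [hlfq] at hx
      exact absurd (lt_of_lt_of_le hx hpm) (lt_irrefl _)
  rw [hqep]
  rw [show ((m : Fin n) : ℤ) = ((L : ℕ) : ℤ) - 1 from by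
    rw [show ((m : Fin n) : ℤ) = (((m : ℕ) : ℤ)) from rfl, hmval]; omega]
end
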